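/- Let ν ∈ ℝ, γ > 0, A₀ ∈ ℝ^{n×n}, C ∈ ℝ^{k×n}, L ∈ ℝ^{n×k}, L̃ ∈ ℝ^{k×k} and G ∈ ℝ^{n×n} satisfy A₀·G = (G + ν·I)·A₀ and C·G = (1+ν)·C. For (ψ, ε, ξ) ∈ ℝ^{k} × ℝⁿ × ℝ with max{ξ, |ψ|²/2} > 0, set σ = sqrt(max{ξ, |ψ|²/2}) and define g(ψ,ε,ξ) = ( C·ε + σ^{ν}·L̃·ψ, A₀·ε + σ^{ν−1}·exp(ln σ·G)·L·ψ, |ψᵀ·(C·ε + σ^{ν}·L̃·ψ)| − γ·⌊ξ − |ψ|²/2⌉^{1+ν/2} ). Then g is homogeneous of degree ν with respect to the dilation D(s)·(ψ,ε,ξ) = (e^{s}·ψ, exp(sG)·ε, e^{2s}·ξ): for every s ∈ ℝ and every such (ψ,ε,ξ), g(e^{s}ψ, exp(sG)ε, e^{2s}ξ) = ( e^{νs}·e^{s}·g₁(ψ,ε,ξ), e^{νs}·exp(sG)·g₂(ψ,ε,ξ), e^{νs}·e^{2s}·g₃(ψ,ε,ξ) ), where g = (g₁,g₂,g₃). -/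

import Mathlib

open Matrix

/-- The signed power `⌊a⌉^p = |a|^p · sign a`. -/
noncomputable def spow (a p : ℝ) : ℝ := |a| ^ p * Real.sign a

section Helpers

open NormedSpace Nat

attribute [local instance] Matrix.linftyOpNormedAddCommGroup Matrix.linftyOpNormedSpace
  Matrix.linftyOpNormedRing Matrix.linftyOpNormedAlgebra

lemma exp_smul_one' {m : ℕ} (c : ℝ) :
    NormedSpace.exp (c • (1 : Matrix (Fin m) (Fin m) ℝ)) = Real.exp c • 1 := by
  have h : c • (1 : Matrix (Fin m) (Fin m) ℝ) = algebraMap ℝ _ c := by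
    simp [Algebra.algebraMap_eq_smul_one]
  erw [h, ← algebraMap_exp_comm, Algebra.algebraMap_eq_smul_one, Real.exp_eq_exp_ℝ]

lemma mul_exp_of_semiconj {m n : ℕ} (P : Matrix (Fin m) (Fin n) ℝ)
    (Q : Matrix (Fin n) (Fin n) ℝ) (R : Matrix (Fin m) (Fin m) ℝ)
    (h : P * Q = R * P) :
    P * NormedSpace.exp Q = NormedSpace.exp R * P := by
  have hpow : ∀ j : ℕ, P * Q ^ j = R ^ j * P := by
    intro j
    induction j with
    | zero => simp
    | succ j ih =>
      rw [pow_succ, pow_succ, ← Matrix.mul_assoc, ih, Matrix.mul_assoc, h, ← Matrix.mul_assoc]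
  have hQ : Summable fun j : ℕ => (j !⁻¹ : ℝ) • Q ^ j := expSeries_summable' Q
  have hR : Summable fun j : ℕ => (j !⁻¹ : ℝ) • R ^ j := expSeries_summable' R
  let fL : Matrix (Fin n) (Fin n) ℝ →L[ℝ] Matrix (Fin m) (Fin n) ℝ :=
    { toFun := fun X => P * X
      map_add' := fun X Y => Matrix.mul_add _ _ _
      map_smul' := fun c X => (Matrix.mul_smul _ _ _)
      cont := by exact Continuous.matrix_mul continuous_const continuous_id }
  let fR : Matrix (Fin m) (Fin m) ℝ →L[ℝ] Matrix (Fin m) (Fin n) ℝ :=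
    { toFun := fun X => X * P
      map_add' := fun X Y => Matrix.add_mul _ _ _
      map_smul' := fun c X => (Matrix.smul_mul _ _ _)
      cont := by exact Continuous.matrix_mul continuous_id continuous_const }
  have h1 : P * NormedSpace.exp Q = fL (∑' j : ℕ, (j !⁻¹ : ℝ) • Q ^ j) := by
    rw [exp_eq_tsum ℝ]; rfl
  have h2 : NormedSpace.exp R * P = fR (∑' j : ℕ, (j !⁻¹ : ℝ) • R ^ j) := by
    rw [exp_eq_tsum ℝ]; rfl
  rw [h1, h2, fL.map_tsum hQ, fR.map_tsum hR]
  congr 1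
  funext j
  rw [_root_.map_smul, _root_.map_smul]
  congr 1
  show P * Q ^ j = R ^ j * P
  exact hpow j

lemma exp_rpow' (s v : ℝ) : (Real.exp s) ^ v = Real.exp (v * s) := by
  rw [Real.rpow_def_of_pos (Real.exp_pos s), Real.log_exp, mul_comm]

lemma spow_pos_mul (c a p : ℝ) (hc : 0 < c) : spow (c * a) p = c ^ p * spow a p := by
  unfold spow
  have hs : Real.sign (c * a) = Real.sign a := by
    rcases lt_trichotomy a 0 with h | h | h
    · rw [Real.sign_of_neg h, Real.sign_of_neg (mul_neg_of_pos_of_neg hc h)]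
    · simp [h]
    · rw [Real.sign_of_pos h, Real.sign_of_pos (mul_pos hc h)]
  rw [abs_mul, abs_of_pos hc, Real.mul_rpow hc.le (abs_nonneg a), hs]
  ring

lemma C_mul_exp {n k : ℕ} (ν : ℝ) (C : Matrix (Fin k) (Fin n) ℝ) (G : Matrix (Fin n) (Fin n) ℝ)
    (hC : C * G = (1 + ν) • C) (s : ℝ) :
    C * NormedSpace.exp (s • G) = Real.exp ((1 + ν) * s) • C := by
  have h : C * (s • G) = (((1 + ν) * s) • (1 : Matrix (Fin k) (Fin k) ℝ)) * C := by
    rw [Matrix.mul_smul, hC, Matrix.smul_mul, Matrix.one_mul, smul_smul, mul_comm s (1 + ν)]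
  rw [mul_exp_of_semiconj C (s • G) _ h, exp_smul_one', Matrix.smul_mul, Matrix.one_mul]

lemma A_mul_exp {n : ℕ} (ν : ℝ) (A₀ G : Matrix (Fin n) (Fin n) ℝ)
    (hA₀ : A₀ * G = (G + ν • (1 : Matrix (Fin n) (Fin n) ℝ)) * A₀) (s : ℝ) :
    A₀ * NormedSpace.exp (s • G)
      = Real.exp (ν * s) • (NormedSpace.exp (s • G) * A₀) := by
  have h : A₀ * (s • G) = (s • (G + ν • (1 : Matrix (Fin n) (Fin n) ℝ))) * A₀ := by
    rw [Matrix.mul_smul, hA₀, Matrix.smul_mul]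
  rw [mul_exp_of_semiconj A₀ (s • G) _ h]
  have hsplit : s • (G + ν • (1 : Matrix (Fin n) (Fin n) ℝ))
      = s • G + (s * ν) • (1 : Matrix (Fin n) (Fin n) ℝ) := by
    rw [smul_add, smul_smul]
  have hcomm : Commute (s • G) ((s * ν) • (1 : Matrix (Fin n) (Fin n) ℝ)) :=
    ((Commute.one_right G).smul_left s).smul_right (s * ν)
  rw [hsplit, Matrix.exp_add_of_commute _ _ hcomm, exp_smul_one', Matrix.mul_smul,
    mul_one, Matrix.smul_mul, mul_comm s ν]

lemma matrix_exp_add_smul {n : ℕ} (G : Matrix (Fin n) (Fin n) ℝ) (a b : ℝ) :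
    NormedSpace.exp ((a + b) • G)
      = NormedSpace.exp (a • G) * NormedSpace.exp (b • G) := by
  rw [add_smul]
  exact Matrix.exp_add_of_commute _ _ (((Commute.refl G).smul_left a).smul_right b)

end Helpers

/-- the extended error vector field of the filtering homogeneous observer
is homogeneous of degree `ν` w.r.t. the dilation
`(ψ, ε, ξ) ↦ (e^s ψ, exp(sG) ε, e^{2s} ξ)`. -/
theorem stmt_14 {n k : ℕ} (ν γ : ℝ) (hγ : 0 < γ)
    (A₀ : Matrix (Fin n) (Fin n) ℝ) (C : Matrix (Fin k) (Fin n) ℝ)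
    (L : Matrix (Fin n) (Fin k) ℝ) (Lt : Matrix (Fin k) (Fin k) ℝ)
    (G : Matrix (Fin n) (Fin n) ℝ)
    (hA₀ : A₀ * G = (G + ν • (1 : Matrix (Fin n) (Fin n) ℝ)) * A₀)
    (hC : C * G = (1 + ν) • C)
    -- the three components of the extended error vector field g(ψ, ε, ξ)
    (g₁ : (Fin k → ℝ) → (Fin n → ℝ) → ℝ → (Fin k → ℝ))
    (g₂ : (Fin k → ℝ) → (Fin n → ℝ) → ℝ → (Fin n → ℝ))
    (g₃ : (Fin k → ℝ) → (Fin n → ℝ) → ℝ → ℝ)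
    (hg₁ : ∀ (ψ : Fin k → ℝ) (ε : Fin n → ℝ) (ξ : ℝ), 0 < max ξ (ψ ⬝ᵥ ψ / 2) →
      g₁ ψ ε ξ = C.mulVec ε +
        (Real.sqrt (max ξ (ψ ⬝ᵥ ψ / 2))) ^ ν • Lt.mulVec ψ)
    (hg₂ : ∀ (ψ : Fin k → ℝ) (ε : Fin n → ℝ) (ξ : ℝ), 0 < max ξ (ψ ⬝ᵥ ψ / 2) →
      g₂ ψ ε ξ = A₀.mulVec ε +
        (Real.sqrt (max ξ (ψ ⬝ᵥ ψ / 2))) ^ (ν - 1) •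
          (NormedSpace.exp (Real.log (Real.sqrt (max ξ (ψ ⬝ᵥ ψ / 2))) • G)).mulVec
            (L.mulVec ψ))
    (hg₃ : ∀ (ψ : Fin k → ℝ) (ε : Fin n → ℝ) (ξ : ℝ), 0 < max ξ (ψ ⬝ᵥ ψ / 2) →
      g₃ ψ ε ξ =
        |ψ ⬝ᵥ (C.mulVec ε + (Real.sqrt (max ξ (ψ ⬝ᵥ ψ / 2))) ^ ν • Lt.mulVec ψ)| -
          γ * spow (ξ - ψ ⬝ᵥ ψ / 2) (1 + ν / 2)) :
    ∀ (s : ℝ) (ψ : Fin k → ℝ) (ε : Fin n → ℝ) (ξ : ℝ), 0 < max ξ (ψ ⬝ᵥ ψ / 2) →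
      g₁ (Real.exp s • ψ) ((NormedSpace.exp (s • G)).mulVec ε) (Real.exp (2 * s) * ξ) =
        (Real.exp (ν * s) * Real.exp s) • g₁ ψ ε ξ ∧
      g₂ (Real.exp s • ψ) ((NormedSpace.exp (s • G)).mulVec ε) (Real.exp (2 * s) * ξ) =
        Real.exp (ν * s) • (NormedSpace.exp (s • G)).mulVec (g₂ ψ ε ξ) ∧
      g₃ (Real.exp s • ψ) ((NormedSpace.exp (s • G)).mulVec ε) (Real.exp (2 * s) * ξ) =
        Real.exp (ν * s) * Real.exp (2 * s) * g₃ ψ ε ξ := by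
  intro s ψ ε ξ hmax
  set M : ℝ := max ξ (ψ ⬝ᵥ ψ / 2) with hMdef
  have hdot : (Real.exp s • ψ) ⬝ᵥ (Real.exp s • ψ) = Real.exp (2 * s) * (ψ ⬝ᵥ ψ) := by
    rw [smul_dotProduct, dotProduct_smul, smul_eq_mul, smul_eq_mul,
      two_mul, Real.exp_add]
    ring
  have hmaxeq : max (Real.exp (2 * s) * ξ) ((Real.exp s • ψ) ⬝ᵥ (Real.exp s • ψ) / 2)
      = Real.exp (2 * s) * M := by
    rw [hdot, mul_div_assoc, hMdef]
    exact (mul_max_of_nonneg _ _ (Real.exp_nonneg _)).symm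
  have hmax' : 0 < max (Real.exp (2 * s) * ξ) ((Real.exp s • ψ) ⬝ᵥ (Real.exp s • ψ) / 2) := by
    rw [hmaxeq]; exact mul_pos (Real.exp_pos _) hmax
  have hσ : 0 < Real.sqrt M := Real.sqrt_pos.2 hmax
  have h2s : Real.exp (2 * s) = Real.exp s * Real.exp s := by
    rw [← Real.exp_add, two_mul]
  have hsqrt : Real.sqrt (Real.exp (2 * s) * M) = Real.exp s * Real.sqrt M := by
    rw [Real.sqrt_mul (Real.exp_nonneg _)]
    congr 1
    rw [show Real.exp (2 * s) = (Real.exp s) ^ 2 by rw [sq, h2s],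
      Real.sqrt_sq (Real.exp_nonneg s)]
  have key1 : C.mulVec ((NormedSpace.exp (s • G)).mulVec ε)
        + Real.sqrt (Real.exp (2 * s) * M) ^ ν • Lt.mulVec (Real.exp s • ψ)
      = (Real.exp (ν * s) * Real.exp s) •
        (C.mulVec ε + Real.sqrt M ^ ν • Lt.mulVec ψ) := by
    rw [hsqrt, Matrix.mulVec_mulVec, C_mul_exp ν C G hC s, Matrix.smul_mulVec,
      Matrix.mulVec_smul, Real.mul_rpow (Real.exp_nonneg s) (Real.sqrt_nonneg M),
      exp_rpow', show (1 + ν) * s = ν * s + s by ring, Real.exp_add]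
    match_scalars <;> ring
  refine ⟨?_, ?_, ?_⟩
  · rw [hg₁ _ _ _ hmax', hg₁ _ _ _ hmax, hmaxeq]
    exact key1
  · rw [hg₂ _ _ _ hmax', hg₂ _ _ _ hmax, hmaxeq, hsqrt,
      Real.log_mul (Real.exp_ne_zero s) (ne_of_gt hσ), Real.log_exp,
      matrix_exp_add_smul, Matrix.mulVec_mulVec, A_mul_exp ν A₀ G hA₀ s,
      Real.mul_rpow (Real.exp_nonneg s) (Real.sqrt_nonneg M), exp_rpow']
    have key : Real.exp ((ν - 1) * s) * Real.exp s = Real.exp (ν * s) := by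
      rw [← Real.exp_add]; congr 1; ring
    simp only [Matrix.smul_mulVec, Matrix.mulVec_smul, ← Matrix.mulVec_mulVec,
      Matrix.mulVec_add]
    match_scalars
    · ring
    · linear_combination Real.sqrt M ^ (ν - 1) * key
  · rw [hg₃ _ _ _ hmax', hg₃ _ _ _ hmax, hmaxeq, hdot, key1]
    rw [smul_dotProduct, dotProduct_smul, smul_eq_mul, smul_eq_mul,
      show Real.exp (2 * s) * ξ - Real.exp (2 * s) * (ψ ⬝ᵥ ψ) / 2
        = Real.exp (2 * s) * (ξ - ψ ⬝ᵥ ψ / 2) by ring,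
      spow_pos_mul _ _ _ (Real.exp_pos _), exp_rpow',
      show (1 + ν / 2) * (2 * s) = ν * s + 2 * s by ring, Real.exp_add,
      abs_mul, abs_mul, abs_of_pos (Real.exp_pos s),
      abs_of_pos (mul_pos (Real.exp_pos (ν * s)) (Real.exp_pos s)), h2s]
    ring
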